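/- Fix an integer n ≥ 1 and distinct positive real numbers β_1, …, β_{n+1}. Then there exist ε > 0 and continuously differentiable functions x_1, …, x_n : (β_{n+1} − ε, β_{n+1} + ε) → ℝ such that x_j(β_{n+1}) = β_j for j = 1, …, n, the first n odd power sums are preserved, i.e. Σ_{j=1}^{n} x_j(t)^{2k+1} + t^{2k+1} = Σ_{j=1}^{n+1} β_j^{2k+1} for every k = 1, …, n and every t in the interval, and the (n+1)st odd power sum has derivative (d/dt)[ Σ_{j=1}^{n} x_j(t)^{2n+3} + t^{2n+3} ] evaluated at t = β_{n+1} equal to (2n+3) β_{n+1}² Π_{j=1}^{n} ( β_{n+1}² − β_j² ), which is nonzero. -/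

import Mathlib

/-!
Consider the map `(t, x) ↦ (p_1, …, p_n)(x_1, …, x_n, t)`, `p_k` the odd power sums. Its partial
derivative in `x` at `(β_{n+1}, β_1, …, β_n)` is, up to the factors `(2k+1) β_j²`, a Vandermonde
matrix in the distinct nodes `β_j²`, so the implicit function theorem gives the `C¹` curve `x(t)`.
Differentiating the preserved sums at `t = β_{n+1}` gives the moment equations
`∑_j (β_j²)^k x_j' = -(β_{n+1}²)^k` for `k = 1, …, n`. Testing them against the polynomial
`X ∏_j (X - β_j²)`, which vanishes at every `β_j²` and has no constant term, evaluates the missing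
moment `k = n + 1`, which is what the derivative of `p_{n+1}` is made of.
-/

open Finset Set Filter Topology Polynomial

theorem sum_pow_card_add_one_mul_add_pow_eq_mul_prod_sub {R ι : Type*} [CommRing R]
    [Nontrivial R] [Fintype ι] (u D : ι → R) (w : R)
    (h : ∀ k, 1 ≤ k → k ≤ Fintype.card ι → ∑ j, u j ^ k * D j = -w ^ k) :
    ∑ j, u j ^ (Fintype.card ι + 1) * D j + w ^ (Fintype.card ι + 1) = w * ∏ j, (w - u j) := by
  set N := Fintype.card ι
  set P : R[X] := X * Lagrange.nodal univ u
  have hdeg : P.natDegree = N + 1 := by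
    rw [natDegree_X_mul Lagrange.nodal_ne_zero, Lagrange.natDegree_nodal, card_univ]
  have hP : ∀ v, P.eval v = ∑ i ∈ range (N + 2), P.coeff i * v ^ i := fun v =>
    eval_eq_sum_range' (by omega) v
  have hlead : P.coeff (N + 1) = 1 := by
    rw [← hdeg]; exact (monic_X.mul Lagrange.nodal_monic).coeff_natDegree
  have hconst : P.coeff 0 = 0 := by simp [P]
  have hroot : ∀ j, P.eval (u j) = 0 := fun j => by
    simp [P, Lagrange.eval_nodal_at_node (mem_univ j)]
  calc ∑ j, u j ^ (N + 1) * D j + w ^ (N + 1)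
      = ∑ i ∈ range (N + 2), P.coeff i * (∑ j, u j ^ i * D j + w ^ i) := by
        rw [sum_range_succ, hlead, sum_eq_zero (s := range (N + 1)), zero_add, one_mul]
        intro i hi
        rcases Nat.eq_zero_or_pos i with rfl | hi0
        · simp [hconst]
        · rw [h i hi0 (by simpa [Nat.lt_succ_iff] using hi)]; ring
    _ = ∑ j, P.eval (u j) * D j + P.eval w := by
        simp only [hP, mul_add, sum_add_distrib, mul_sum, sum_mul]
        rw [sum_comm]
        congr 1
        exact sum_congr rfl fun j _ => sum_congr rfl fun i _ => by ring
    _ = w * ∏ j, (w - u j) := by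
        simp [hroot, P, Lagrange.eval_nodal]

theorem ContinuousLinearMap.isInvertible_of_injective {𝕜 E : Type*} [NontriviallyNormedField 𝕜]
    [CompleteSpace 𝕜] [NormedAddCommGroup E] [NormedSpace 𝕜 E] [FiniteDimensional 𝕜 E]
    (f : E →L[𝕜] E) (hf : Function.Injective f) : f.IsInvertible :=
  ⟨(LinearEquiv.ofInjectiveEndo f.toLinearMap hf).toContinuousLinearEquiv, rfl⟩

theorem hasDerivAt_sum_pow_add_pow {ι : Type*} [Fintype ι] {x : ι → ℝ → ℝ} {x' : ι → ℝ} {b : ℝ}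
    (hx : ∀ j, HasDerivAt (x j) (x' j) b) (m : ℕ) :
    HasDerivAt (fun t => ∑ j, x j t ^ (m + 1) + t ^ (m + 1))
      ((m + 1) * (∑ j, x j b ^ m * x' j + b ^ m)) b := by
  refine ((HasDerivAt.fun_sum (u := univ) fun j _ => (hx j).fun_pow (m + 1)).fun_add
    (hasDerivAt_pow (m + 1) b)).congr_deriv ?_
  simp only [Nat.cast_add, Nat.cast_one, add_tsub_cancel_right, mul_add, mul_sum, mul_assoc]

/-- Component `k : Fin n` is the odd power sum `p_{k+1}` of the list `(x_1, …, x_n, t)`,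
encoded as `(t, x)`. -/
def oddPowerSums (n : ℕ) (p : ℝ × (Fin n → ℝ)) : Fin n → ℝ :=
  fun k => ∑ j, p.2 j ^ (2 * (k + 1 : ℕ) + 1) + p.1 ^ (2 * (k + 1 : ℕ) + 1)

theorem oddPowerSums_eq_iff {n : ℕ} {p q : ℝ × (Fin n → ℝ)} :
    oddPowerSums n p = oddPowerSums n q ↔ ∀ k, 1 ≤ k → k ≤ n →
      ∑ j, p.2 j ^ (2 * k + 1) + p.1 ^ (2 * k + 1) =
        ∑ j, q.2 j ^ (2 * k + 1) + q.1 ^ (2 * k + 1) := by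
  constructor
  · intro h k hk1 hkn
    obtain ⟨k, rfl⟩ := Nat.exists_eq_add_of_le' hk1
    exact congrFun h ⟨k, hkn⟩
  · intro h
    funext k
    exact h (k + 1) (by omega) k.isLt

theorem contDiff_oddPowerSums (n : ℕ) : ContDiff ℝ 1 (oddPowerSums n) := by
  unfold oddPowerSums
  fun_prop

theorem hasFDerivAt_oddPowerSums_right (n : ℕ) (b : ℝ) (a : Fin n → ℝ) :
    HasFDerivAt (fun y => oddPowerSums n (b, y))
      (ContinuousLinearMap.pi fun k : Fin n => ∑ j,
        (((2 * (k + 1 : ℕ) + 1 : ℕ) : ℝ) * a j ^ (2 * (k + 1 : ℕ))) •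
          (ContinuousLinearMap.proj j : (Fin n → ℝ) →L[ℝ] ℝ)) a := by
  refine hasFDerivAt_pi.2 fun k => ?_
  simp only [oddPowerSums]
  refine (HasFDerivAt.fun_sum fun j _ => ?_).add_const _
  exact (hasDerivAt_pow _ (a j)).comp_hasFDerivAt a (hasFDerivAt_apply (𝕜 := ℝ) j a)

theorem isInvertible_fderiv_oddPowerSums_comp_inr {n : ℕ} (b : ℝ) {a : Fin n → ℝ}
    (ha : ∀ j, a j ≠ 0) (ha2 : Function.Injective fun j => a j ^ 2) :
    (fderiv ℝ (oddPowerSums n) (b, a) ∘L .inr ℝ ℝ (Fin n → ℝ)).IsInvertible := by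
  have hcomp := ((contDiff_oddPowerSums n).differentiable one_ne_zero (b, a)).hasFDerivAt.comp a
    (hasFDerivAt_prodMk_right b a)
  rw [← (hasFDerivAt_oddPowerSums_right n b a).unique hcomp]
  refine ContinuousLinearMap.isInvertible_of_injective _
    ((injective_iff_map_eq_zero _).2 fun v hv => ?_)
  have hmoments : ∀ k : Fin n, ∑ j, (a j ^ 2 * v j) * (a j ^ 2) ^ (k : ℕ) = 0 := by
    intro k
    have hk := congrFun hv k
    simp only [ContinuousLinearMap.pi_apply, _root_.sum_apply, _root_.smul_apply,
      ContinuousLinearMap.proj_apply, smul_eq_mul, Pi.zero_apply] at hk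
    refine (mul_eq_zero.1 (?_ : ((2 * (k + 1 : ℕ) + 1 : ℕ) : ℝ) * _ = 0)).resolve_left
      (by positivity)
    rw [mul_sum, ← hk]
    exact sum_congr rfl fun j _ => by ring
  funext j
  simpa [ha j] using congrFun (Matrix.eq_zero_of_forall_pow_sum_mul_pow_eq_zero ha2 hmoments) j

theorem exists_contDiffOn_oddPowerSums_eq {n : ℕ} (b : ℝ) {a : Fin n → ℝ}
    (ha : ∀ j, a j ≠ 0) (ha2 : Function.Injective fun j => a j ^ 2) :
    ∃ ε > 0, ∃ x : Fin n → ℝ → ℝ, (∀ j, ContDiffOn ℝ 1 (x j) (Ioo (b - ε) (b + ε))) ∧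
      (∀ j, x j b = a j) ∧
      ∀ t ∈ Ioo (b - ε) (b + ε), oddPowerSums n (t, fun j => x j t) = oddPowerSums n (b, a) := by
  have hf : ContDiffAt ℝ 1 (oddPowerSums n) (b, a) := (contDiff_oddPowerSums n).contDiffAt
  have hinv := isInvertible_fderiv_oddPowerSums_comp_inr b ha ha2
  set ψ := hf.implicitFunction one_ne_zero hinv
  obtain ⟨U, hU, hψU⟩ :=
    (hf.contDiffAt_implicitFunction one_ne_zero hinv).contDiffOn le_rfl (by simp)
  obtain ⟨ε, hε, hball⟩ := Metric.eventually_nhds_iff_ball.1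
    ((eventually_mem_set.2 hU).and (hf.eventually_apply_implicitFunction one_ne_zero hinv))
  rw [Real.ball_eq_Ioo] at hball
  refine ⟨ε, hε, fun j t => ψ t j, fun j => ?_, fun j => ?_, fun t ht => (hball t ht).2⟩
  · exact (contDiff_apply ℝ ℝ j).comp_contDiffOn (hψU.mono fun t ht => (hball t ht).1)
  · exact congrFun (hf.implicitFunction_apply_self one_ne_zero hinv) j

theorem hasDerivAt_next_oddPowerSum_of_eventually_eq {n : ℕ} {x : Fin n → ℝ → ℝ}
    {x' a : Fin n → ℝ} {b : ℝ} (hx : ∀ j, HasDerivAt (x j) (x' j) b) (hxb : ∀ j, x j b = a j)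
    (hconst : ∀ᶠ t in 𝓝 b, oddPowerSums n (t, fun j => x j t) = oddPowerSums n (b, a)) :
    HasDerivAt (fun t => ∑ j, x j t ^ (2 * n + 3) + t ^ (2 * n + 3))
      ((2 * n + 3) * b ^ 2 * ∏ j, (b ^ 2 - a j ^ 2)) b := by
  have hmoments : ∀ k, 1 ≤ k → k ≤ Fintype.card (Fin n) →
      ∑ j, (a j ^ 2) ^ k * x' j = -(b ^ 2) ^ k := by
    intro k hk1 hkn
    have hzero : HasDerivAt (fun t => ∑ j, x j t ^ (2 * k + 1) + t ^ (2 * k + 1)) 0 b :=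
      (hasDerivAt_const b _).congr_of_eventuallyEq (hconst.mono fun t ht =>
        (oddPowerSums_eq_iff.1 ht) k hk1 (by simpa using hkn))
    have hderiv := (hasDerivAt_sum_pow_add_pow hx (2 * k)).unique hzero
    simp only [hxb, pow_mul] at hderiv
    linarith [(mul_eq_zero.1 hderiv).resolve_left (by positivity)]
  have key := sum_pow_card_add_one_mul_add_pow_eq_mul_prod_sub (fun j => a j ^ 2) x' (b ^ 2)
    hmoments
  refine (hasDerivAt_sum_pow_add_pow hx (2 * n + 2)).congr_deriv ?_
  simp only [hxb, Fintype.card_fin] at key ⊢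
  rw [show 2 * n + 2 = 2 * (n + 1) by ring]
  simp only [pow_mul]
  push_cast
  linear_combination (2 * n + 3 : ℝ) * key

theorem stmt_19_general (n : ℕ) (β : Fin (n + 1) → ℝ)
    (hinj : Function.Injective β) (hpos : ∀ i, 0 < β i) :
    ∃ ε > (0 : ℝ), ∃ x : Fin n → ℝ → ℝ,
      (∀ j, ContDiffOn ℝ 1 (x j)
        (Set.Ioo (β (Fin.last n) - ε) (β (Fin.last n) + ε))) ∧
      (∀ j, x j (β (Fin.last n)) = β j.castSucc) ∧
      (∀ k : ℕ, 1 ≤ k → k ≤ n →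
        ∀ t ∈ Set.Ioo (β (Fin.last n) - ε) (β (Fin.last n) + ε),
          (∑ j, x j t ^ (2 * k + 1)) + t ^ (2 * k + 1) = ∑ i, β i ^ (2 * k + 1)) ∧
      deriv (fun t => (∑ j, x j t ^ (2 * n + 3)) + t ^ (2 * n + 3)) (β (Fin.last n)) =
        (2 * (n : ℝ) + 3) * β (Fin.last n) ^ 2 *
          ∏ j : Fin n, (β (Fin.last n) ^ 2 - β j.castSucc ^ 2) ∧
      (2 * (n : ℝ) + 3) * β (Fin.last n) ^ 2 *
          ∏ j : Fin n, (β (Fin.last n) ^ 2 - β j.castSucc ^ 2) ≠ 0 := by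
  set b := β (Fin.last n)
  set a : Fin n → ℝ := fun j => β j.castSucc
  have ha : ∀ j, a j ≠ 0 := fun j => (hpos _).ne'
  have hsq : ∀ i i', β i ^ 2 = β i' ^ 2 → i = i' := fun i i' h =>
    hinj ((sq_eq_sq₀ (hpos i).le (hpos i').le).1 h)
  have ha2 : Function.Injective fun j => a j ^ 2 := fun j j' h =>
    Fin.castSucc_injective n (hsq _ _ h)
  obtain ⟨ε, hε, x, hx, hxb, hconst⟩ := exists_contDiffOn_oddPowerSums_eq b ha ha2
  have hI : Ioo (b - ε) (b + ε) ∈ 𝓝 b := Ioo_mem_nhds (by linarith) (by linarith)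
  have hderiv := hasDerivAt_next_oddPowerSum_of_eventually_eq
    (fun j => (((hx j).differentiableOn one_ne_zero).differentiableAt hI).hasDerivAt) hxb
    (eventually_of_mem hI hconst)
  refine ⟨ε, hε, x, hx, hxb, fun k hk1 hkn t ht => ?_, hderiv.deriv, ?_⟩
  · rw [Fin.sum_univ_castSucc]
    exact oddPowerSums_eq_iff.1 (hconst t ht) k hk1 hkn
  · have hb : 0 < b := hpos _
    refine mul_ne_zero (by positivity) (prod_ne_zero_iff.2 fun j _ => sub_ne_zero.2 fun h => ?_)
    exact (Fin.castSucc_lt_last j).ne' (hsq _ _ h)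

/-- **Implicit-function-theorem perturbation of the amplitude parameters.**
Fix `n ≥ 1` and distinct positive reals `β_1, …, β_{n+1}`.  There exist `ε > 0` and `C¹`
functions `x_1, …, x_n` on `(β_{n+1} - ε, β_{n+1} + ε)` with `x_j(β_{n+1}) = β_j`,
preserving the first `n` odd power sums:
`∑_j x_j(t)^{2k+1} + t^{2k+1} = ∑_j β_j^{2k+1}` for `k = 1, …, n`, and such that the
derivative of `t ↦ ∑_j x_j(t)^{2n+3} + t^{2n+3}` at `t = β_{n+1}` equals
`(2n+3) β_{n+1}² ∏_{j=1}^n (β_{n+1}² - β_j²)`, which is nonzero. -/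
theorem stmt_19 (n : ℕ) (hn : 1 ≤ n) (β : Fin (n + 1) → ℝ)
    (hinj : Function.Injective β) (hpos : ∀ i, 0 < β i) :
    ∃ ε > (0 : ℝ), ∃ x : Fin n → ℝ → ℝ,
      (∀ j, ContDiffOn ℝ 1 (x j)
        (Set.Ioo (β (Fin.last n) - ε) (β (Fin.last n) + ε))) ∧
      (∀ j, x j (β (Fin.last n)) = β j.castSucc) ∧
      (∀ k : ℕ, 1 ≤ k → k ≤ n →
        ∀ t ∈ Set.Ioo (β (Fin.last n) - ε) (β (Fin.last n) + ε),
          (∑ j, x j t ^ (2 * k + 1)) + t ^ (2 * k + 1) = ∑ i, β i ^ (2 * k + 1)) ∧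
      deriv (fun t => (∑ j, x j t ^ (2 * n + 3)) + t ^ (2 * n + 3)) (β (Fin.last n)) =
        (2 * (n : ℝ) + 3) * β (Fin.last n) ^ 2 *
          ∏ j : Fin n, (β (Fin.last n) ^ 2 - β j.castSucc ^ 2) ∧
      (2 * (n : ℝ) + 3) * β (Fin.last n) ^ 2 *
          ∏ j : Fin n, (β (Fin.last n) ^ 2 - β j.castSucc ^ 2) ≠ 0 :=
  stmt_19_general n β hinj hpos
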